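/- arXiv:2403.16031 — 7 statements merged into one kernel-verified Lean document; each statement's English description precedes it below -/
import Mathlib

section
/- If a ternary conditional independence relation on subsets of a finite variable set satisfies the intersection property (X ⫫ Y | Z ∪ S and X ⫫ Z | Y ∪ S imply X ⫫ (Y ∪ Z) | S) together with the decomposition and weak union properties, then for every variable v there exists a unique minimal Markov blanket mb(v), i.e., a unique inclusion-minimal set M ⊆ V \ {v} such that v is independent of V \ (M ∪ {v}) given M. -/
/-- a ternary conditional independence relation on subsets of a finite
variable set satisfying the semi-graphoid axioms together with the intersection property
admits, for every variable `v`, a unique inclusion-minimal Markov blanket. -/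
theorem unique_minimal_markov_blanket
    {V : Type*} [Fintype V] [DecidableEq V]
    (CI : Finset V → Finset V → Finset V → Prop)
    (hTriv : ∀ X S, CI X ∅ S)
    (hSym : ∀ X Y S, CI X Y S → CI Y X S)
    (hDec : ∀ X Y Z S, CI X (Y ∪ Z) S → CI X Y S)
    (hWU : ∀ X Y Z S, CI X (Y ∪ Z) S → CI X Y (Z ∪ S))
    (hContr : ∀ X Y Z S, CI X Y S → CI X Z (Y ∪ S) → CI X (Y ∪ Z) S)
    (hInt : ∀ X Y Z S, CI X Y (Z ∪ S) → CI X Z (Y ∪ S) → CI X (Y ∪ Z) S) :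
    ∀ v : V, ∃! M : Finset V,
      M ⊆ Finset.univ \ {v} ∧
      CI {v} (Finset.univ \ (M ∪ {v})) M ∧
      ∀ M' ⊂ M, ¬ CI {v} (Finset.univ \ (M' ∪ {v})) M' := by
  intro v
  classical
  set Bl : Finset V → Prop := fun M =>
    M ⊆ Finset.univ \ {v} ∧ CI {v} (Finset.univ \ (M ∪ {v})) M with hBldef
  -- blankets are closed under intersection
  have inter : ∀ M N, Bl M → Bl N → Bl (M ∩ N) := by
    intro M N hM hN
    obtain ⟨hMs, hMci⟩ := hM
    obtain ⟨hNs, hNci⟩ := hN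
    have hvM : v ∉ M := fun h => by simpa using hMs h
    have hvN : v ∉ N := fun h => by simpa using hNs h
    set A := M \ N with hA
    set B := N \ M with hB
    set S := M ∩ N with hS
    set R := (Finset.univ : Finset V) \ (M ∪ N ∪ {v}) with hR
    have eq1 : (Finset.univ : Finset V) \ (M ∪ {v}) = B ∪ R := by
      ext x
      by_cases hx : x = v
      · simp [hA, hB, hS, hR, hx, hvM, hvN]
      · simp [hA, hB, hS, hR, hx]; tauto
    have eq2 : M = A ∪ S := by
      ext x; simp [hA, hS]; tauto
    have eq3 : (Finset.univ : Finset V) \ (N ∪ {v}) = A ∪ R := by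
      ext x
      by_cases hx : x = v
      · simp [hA, hB, hS, hR, hx, hvM, hvN]
      · simp [hA, hB, hS, hR, hx]; tauto
    have eq4 : N = B ∪ S := by
      ext x; simp [hB, hS]; tauto
    have hMci' : CI {v} (B ∪ R) (A ∪ S) := by rw [← eq1, ← eq2]; exact hMci
    have hNci' : CI {v} (A ∪ R) (B ∪ S) := by rw [← eq3, ← eq4]; exact hNci
    have step1 : CI {v} A (R ∪ (B ∪ S)) := hWU _ A R _ hNci'
    have hMci'' : CI {v} (R ∪ B) (A ∪ S) := by
      rw [Finset.union_comm R B]; exact hMci'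
    have step2 : CI {v} B (R ∪ (A ∪ S)) := hWU _ B R (A ∪ S) hMci'
    have e1 : R ∪ (B ∪ S) = B ∪ (R ∪ S) := by ext x; simp; tauto
    have e2 : R ∪ (A ∪ S) = A ∪ (R ∪ S) := by ext x; simp; tauto
    rw [e1] at step1
    rw [e2] at step2
    have step3 : CI {v} (A ∪ B) (R ∪ S) := hInt _ A B (R ∪ S) step1 step2
    have step4 : CI {v} R (B ∪ (A ∪ S)) := hWU _ R B (A ∪ S) hMci''
    have e3 : B ∪ (A ∪ S) = (A ∪ B) ∪ S := by ext x; simp; tauto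
    rw [e3] at step4
    have step5 : CI {v} ((A ∪ B) ∪ R) S := hInt _ (A ∪ B) R S step3 step4
    constructor
    · intro x hx
      rw [hS, Finset.mem_inter] at hx
      exact hMs hx.1
    · show CI {v} (Finset.univ \ (M ∩ N ∪ {v})) (M ∩ N)
      have e4 : (Finset.univ : Finset V) \ (M ∩ N ∪ {v}) = (A ∪ B) ∪ R := by
        ext x
        by_cases hx : x = v
        · simp [hA, hB, hR, hx, hvM, hvN]
        · simp [hA, hB, hR, hx]; tauto
      rw [e4]
      exact step5
  -- existence of a blanket
  have hfull : Bl (Finset.univ \ {v}) := by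
    constructor
    · exact Finset.Subset.refl _
    · have : (Finset.univ : Finset V) \ ((Finset.univ \ {v}) ∪ {v}) = ∅ := by
        ext x; by_cases hx : x = v <;> simp [hx]
      rw [this]
      exact hTriv _ _
  have hex : ∃ n, ∃ M, Bl M ∧ M.card = n := ⟨_, _, hfull, rfl⟩
  obtain ⟨M₀, hM₀, hcard₀⟩ := Nat.find_spec hex
  have hmin : ∀ M, Bl M → Nat.find hex ≤ M.card := fun M hM =>
    Nat.find_min' hex ⟨M, hM, rfl⟩
  refine ⟨M₀, ⟨hM₀.1, hM₀.2, ?_⟩, ?_⟩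
  · intro M' hM' hci
    have hBl' : Bl M' := ⟨hM'.subset.trans hM₀.1, hci⟩
    have := hmin M' hBl'
    have hlt : M'.card < M₀.card := Finset.card_lt_card hM'
    omega
  · rintro N ⟨hNs, hNci, hNmin⟩
    have hBlN : Bl N := ⟨hNs, hNci⟩
    have hK : Bl (M₀ ∩ N) := inter _ _ hM₀ hBlN
    -- M₀ ∩ N = N by minimality of N
    have hKN : M₀ ∩ N = N := by
      by_contra hne
      have hss : M₀ ∩ N ⊂ N := (Finset.inter_subset_right).ssubset_of_ne hne
      exact hNmin _ hss hK.2
    -- M₀ ∩ N = M₀ by cardinality minimality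
    have hKM : M₀ ∩ N = M₀ := by
      apply Finset.eq_of_subset_of_card_le Finset.inter_subset_left
      have := hmin _ hK
      omega
    rw [← hKN, hKM]
end

section
/- Under the semi-graphoid axioms plus the intersection property, for any variable v and any subset U ⊆ V \ {v}, the conditional Markov blanket of v given U is uniquely determined and equals mb(v) \ U, where mb(v) is the unique minimal Markov blanket of v. -/
/-- `C` is a conditional Markov blanket of `v` given `U`: conditioning on `C ∪ U`
renders `v` independent of every other set of variables. -/
def IsCMB {V : Type*} [Fintype V] [DecidableEq V]
    (CI : Finset V → Finset V → Finset V → Prop) (v : V) (U C : Finset V) : Prop :=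
  ∀ W ⊆ Finset.univ \ (C ∪ U ∪ {v}), CI {v} W (C ∪ U)

/-!
Under the intersection property the Markov blankets of `v` are closed under intersection, so
they are exactly the supersets (avoiding `v`) of the minimal one `M`. By weak union and
decomposition, `C` is a conditional Markov blanket given `U` iff `C ∪ U` is a Markov blanket,
i.e. iff `M ⊆ C ∪ U`, i.e. iff `M \ U ⊆ C`; so `M \ U` is the least one.
-/

namespace CondIndep

open Finset

variable {V : Type*} [Fintype V] [DecidableEq V] (CI : Finset V → Finset V → Finset V → Prop)

def Decomposition : Prop := ∀ X Y Z S, CI X (Y ∪ Z) S → CI X Y S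

def WeakUnion : Prop := ∀ X Y Z S, CI X (Y ∪ Z) S → CI X Y (Z ∪ S)

def Intersection : Prop :=
  ∀ X Y Z S, CI X Y (Z ∪ S) → CI X Z (Y ∪ S) → CI X (Y ∪ Z) S

def IsMarkovBlanket (X B : Finset V) : Prop := CI X (univ \ (B ∪ X)) B

variable {CI}

theorem IsMarkovBlanket.inter (hWU : WeakUnion CI) (hInt : Intersection CI) {X B₁ B₂ : Finset V}
    (hd₁ : Disjoint B₁ X) (hd₂ : Disjoint B₂ X)
    (h₁ : IsMarkovBlanket CI X B₁) (h₂ : IsMarkovBlanket CI X B₂) :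
    IsMarkovBlanket CI X (B₁ ∩ B₂) := by
  unfold IsMarkovBlanket at *
  -- Split the variables outside `X` into `A`, `B`, `C` and the rest `R`; the intersection
  -- property first merges `B` with `A`, then `B ∪ A` with `R`.
  set A := B₁ \ B₂
  set B := B₂ \ B₁
  set C := B₁ ∩ B₂
  set R := univ \ (B₁ ∪ B₂ ∪ X)
  replace h₁ : CI X (B ∪ R) (A ∪ C) := by convert h₁ using 2 <;> grind [Finset.disjoint_left]
  replace h₂ : CI X (A ∪ R) (B ∪ C) := by convert h₂ using 2 <;> grind [Finset.disjoint_left]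
  have hBA : CI X (B ∪ A) (R ∪ C) :=
    hInt X B A (R ∪ C) (union_left_comm R A C ▸ hWU X B R _ h₁)
      (union_left_comm R B C ▸ hWU X A R _ h₂)
  have hR : CI X R (B ∪ A ∪ C) := union_assoc B A C ▸ hWU X R B _ (union_comm B R ▸ h₁)
  convert hInt X (B ∪ A) R C hBA hR using 2
  grind [Finset.disjoint_left]

theorem IsMarkovBlanket.subset_of_minimal (hWU : WeakUnion CI) (hInt : Intersection CI)
    {X M B : Finset V} (hdM : Disjoint M X) (hM : IsMarkovBlanket CI X M)
    (hMmin : ∀ M' ⊂ M, ¬ IsMarkovBlanket CI X M') (hdB : Disjoint B X)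
    (hB : IsMarkovBlanket CI X B) : M ⊆ B := by
  by_contra hMB
  exact hMmin _ (inf_lt_left.mpr hMB) (hM.inter hWU hInt hdM hdB hB)

theorem IsMarkovBlanket.mono (hWU : WeakUnion CI) {X B B' : Finset V}
    (hB : IsMarkovBlanket CI X B) (hBB' : B ⊆ B') (hd : Disjoint B' X) :
    IsMarkovBlanket CI X B' := by
  unfold IsMarkovBlanket at *
  have hB : CI X (univ \ (B' ∪ X) ∪ B' \ B) B := by
    convert hB using 2
    grind [Finset.disjoint_left]
  simpa only [sdiff_union_of_subset hBB'] using hWU _ _ _ _ hB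

theorem IsMarkovBlanket.condIndep_of_subset (hDec : Decomposition CI) {X B W : Finset V}
    (hB : IsMarkovBlanket CI X B) (hW : W ⊆ univ \ (B ∪ X)) : CI X W B :=
  hDec X W _ B (by rwa [union_sdiff_of_subset hW])

theorem isCMB_iff_isMarkovBlanket (hDec : Decomposition CI) {v : V} {U C : Finset V} :
    IsCMB CI v U C ↔ IsMarkovBlanket CI {v} (C ∪ U) :=
  ⟨fun h ↦ h _ subset_rfl, fun h _ hW ↦ h.condIndep_of_subset hDec hW⟩

theorem isCMB_iff_sdiff_subset (hDec : Decomposition CI) (hWU : WeakUnion CI)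
    (hInt : Intersection CI) {v : V} {U M C : Finset V} (hvU : v ∉ U) (hvM : v ∉ M)
    (hM : IsMarkovBlanket CI {v} M) (hMmin : ∀ M' ⊂ M, ¬ IsMarkovBlanket CI {v} M')
    (hvC : v ∉ C) : IsCMB CI v U C ↔ M \ U ⊆ C := by
  have hd : Disjoint (C ∪ U) {v} := by simp [hvC, hvU]
  rw [isCMB_iff_isMarkovBlanket hDec, show M \ U ⊆ C ↔ M ⊆ C ∪ U from sdiff_le_iff']
  exact ⟨hM.subset_of_minimal hWU hInt (by simpa using hvM) hMmin hd,
    fun h ↦ hM.mono hWU h hd⟩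

end CondIndep

open CondIndep in
theorem conditional_markov_blanket_eq_general
    {V : Type*} [Fintype V] [DecidableEq V]
    (CI : Finset V → Finset V → Finset V → Prop)
    (hDec : ∀ X Y Z S, CI X (Y ∪ Z) S → CI X Y S)
    (hWU : ∀ X Y Z S, CI X (Y ∪ Z) S → CI X Y (Z ∪ S))
    (hInt : ∀ X Y Z S, CI X Y (Z ∪ S) → CI X Z (Y ∪ S) → CI X (Y ∪ Z) S)
    (v : V) (U : Finset V) (hU : U ⊆ Finset.univ \ {v})
    (M : Finset V) (hMsub : M ⊆ Finset.univ \ {v})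
    (hMmb : CI {v} (Finset.univ \ (M ∪ {v})) M)
    (hMmin : ∀ M' ⊂ M, ¬ CI {v} (Finset.univ \ (M' ∪ {v})) M') :
    IsCMB CI v U (M \ U) ∧
    (∀ C' ⊂ M \ U, ¬ IsCMB CI v U C') ∧
    (∀ C ⊆ Finset.univ \ (U ∪ {v}), IsCMB CI v U C →
      (∀ C' ⊂ C, ¬ IsCMB CI v U C') → C = M \ U) := by
  have hvU : v ∉ U := fun h ↦ by simpa using hU h
  have hvM : v ∉ M := fun h ↦ by simpa using hMsub h
  have key {C : Finset V} (hvC : v ∉ C) : IsCMB CI v U C ↔ M \ U ⊆ C :=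
    isCMB_iff_sdiff_subset hDec hWU hInt hvU hvM hMmb hMmin hvC
  have hvMU : v ∉ M \ U := fun h ↦ hvM (Finset.mem_sdiff.mp h).1
  refine ⟨(key hvMU).mpr subset_rfl, fun C' hC' hC'cmb ↦ ?_, fun C hC hCcmb hCmin ↦ ?_⟩
  · exact hC'.not_subset ((key fun h ↦ hvMU (hC'.subset h)).mp hC'cmb)
  · have hvC : v ∉ C := fun h ↦ by simpa using hC h
    by_contra hne
    exact hCmin _ (((key hvC).mp hCcmb).ssubset_of_ne (Ne.symm hne)) ((key hvMU).mpr subset_rfl)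

/-- under the semi-graphoid axioms plus the intersection property, for any
variable `v` and any `U ⊆ V \ {v}`, the conditional Markov blanket of `v` given `U`
is uniquely determined and equals `mb(v) \ U`, where `M = mb(v)` is the unique minimal
Markov blanket of `v`. -/
theorem conditional_markov_blanket_eq
    {V : Type*} [Fintype V] [DecidableEq V]
    (CI : Finset V → Finset V → Finset V → Prop)
    (hTriv : ∀ X S, CI X ∅ S)
    (hSym : ∀ X Y S, CI X Y S → CI Y X S)
    (hDec : ∀ X Y Z S, CI X (Y ∪ Z) S → CI X Y S)
    (hWU : ∀ X Y Z S, CI X (Y ∪ Z) S → CI X Y (Z ∪ S))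
    (hContr : ∀ X Y Z S, CI X Y S → CI X Z (Y ∪ S) → CI X (Y ∪ Z) S)
    (hInt : ∀ X Y Z S, CI X Y (Z ∪ S) → CI X Z (Y ∪ S) → CI X (Y ∪ Z) S)
    (v : V) (U : Finset V) (hU : U ⊆ Finset.univ \ {v})
    (M : Finset V) (hMsub : M ⊆ Finset.univ \ {v})
    (hMmb : CI {v} (Finset.univ \ (M ∪ {v})) M)
    (hMmin : ∀ M' ⊂ M, ¬ CI {v} (Finset.univ \ (M' ∪ {v})) M') :
    IsCMB CI v U (M \ U) ∧
    (∀ C' ⊂ M \ U, ¬ IsCMB CI v U C') ∧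
    (∀ C ⊆ Finset.univ \ (U ∪ {v}), IsCMB CI v U C →
      (∀ C' ⊂ C, ¬ IsCMB CI v U C') → C = M \ U) :=
  conditional_markov_blanket_eq_general CI hDec hWU hInt v U hU M hMsub hMmb hMmin
end

section
/- Let G be a DAG with two-layer partition X ≺ Y and let P be faithful to G. If there is a directed path X_{k0} → Y_{j1} → ⋯ → Y_{j0} entirely within Y after the first step, and X_{k0} → Y_{j0} is not an edge of G, then Y_{j0} is conditionally dependent on X_{k0} given X_{-k0}; hence H^(0) contains the false positive edge X_{k0} → Y_{j0}. -/
/-- Directed reachability in a digraph (reflexive-transitive closure of the edge relation). -/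
def Reaches {V : Type*} (G : V → V → Prop) : V → V → Prop := Relation.ReflTransGen G

/-- A digraph is acyclic if no vertex lies on a directed cycle. -/
def Acyclic {V : Type*} (G : V → V → Prop) : Prop := ∀ v, ¬ Relation.TransGen G v v

/-- `p` is an (undirected) path from `a` to `b` in the digraph `G`. -/
def IsTrail {V : Type*} (G : V → V → Prop) (a b : V) (p : List V) : Prop :=
  p.Chain' (fun x y => G x y ∨ G y x) ∧ p.head? = some a ∧ p.getLast? = some b ∧ p.Nodup

/-- Consecutive triples of a list. -/
def triples {V : Type*} : List V → List (V × V × V)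
  | x :: y :: z :: r => (x, y, z) :: triples (y :: z :: r)
  | _ => []

/-- A triple `(x, y, z)` on a path is blocked by `S` if `y` is a collider none of whose
descendants lies in `S`, or `y` is a non-collider belonging to `S`. -/
def BlockedTriple {V : Type*} [DecidableEq V] (G : V → V → Prop) (S : Finset V)
    (t : V × V × V) : Prop :=
  (G t.1 t.2.1 ∧ G t.2.2 t.2.1 ∧ ∀ d, Reaches G t.2.1 d → d ∉ S)
  ∨ (¬ (G t.1 t.2.1 ∧ G t.2.2 t.2.1) ∧ t.2.1 ∈ S)

/-- A path is blocked by `S` if some internal triple is blocked. -/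
def Blocked {V : Type*} [DecidableEq V] (G : V → V → Prop) (S : Finset V) (p : List V) : Prop :=
  ∃ t ∈ triples p, BlockedTriple G S t

/-- `S` d-separates `a` and `b` in `G` if every path between them is blocked. -/
def DSep {V : Type*} [DecidableEq V] (G : V → V → Prop) (S : Finset V) (a b : V) : Prop :=
  ∀ p : List V, IsTrail G a b p → Blocked G S p

/-!
A directed path `X_{k₀} → Y_{j₁} → ⋯ → Y_{j₀}` is a trail between `X_{k₀}` and `Y_{j₀}` on
which every triple is a chain `u → v → w`, never a collider (that would be a 2-cycle), and whose
vertices all lie outside `X_{-k₀}`. So no triple is blocked, `X_{-k₀}` does not d-separate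
`X_{k₀}` from `Y_{j₀}`, and faithfulness turns this into conditional dependence.
-/

section DSeparation

variable {V : Type*} {G : V → V → Prop}

lemma mid_mem_of_mem_triples : ∀ {p : List V} {t : V × V × V}, t ∈ triples p → t.2.1 ∈ p
  | x :: y :: z :: r, t, ht => by
    rcases List.mem_cons.1 ht with rfl | ht
    · simp
    · exact List.mem_cons_of_mem x (mid_mem_of_mem_triples ht)
  | [], _, ht | [_], _, ht | [_, _], _, ht => by simp [triples] at ht

lemma List.IsChain.rel_of_mem_triples :
    ∀ {p : List V}, p.IsChain G → ∀ t ∈ triples p, G t.1 t.2.1 ∧ G t.2.1 t.2.2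
  | x :: y :: z :: r, hp, t, ht => by
    rw [List.isChain_cons_cons] at hp
    rcases List.mem_cons.1 ht with rfl | ht
    · exact ⟨hp.1, (List.isChain_cons_cons.1 hp.2).1⟩
    · exact hp.2.rel_of_mem_triples t ht
  | [], _, _, ht | [_], _, _, ht | [_, _], _, _, ht => by simp [triples] at ht

lemma Acyclic.nodup_of_isChain (hG : Acyclic G) {p : List V} (hp : p.IsChain G) : p.Nodup :=
  have : Std.Irrefl (Relation.TransGen G) := ⟨hG⟩
  (hp.imp fun _ _ => Relation.TransGen.single).pairwise.nodup

variable [DecidableEq V]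

lemma Acyclic.not_blocked_of_isChain (hG : Acyclic G) {S : Finset V} {p : List V}
    (hp : p.IsChain G) (hS : ∀ v ∈ p, v ∉ S) : ¬ Blocked G S p := by
  rintro ⟨t, ht, hcollider | hnoncollider⟩
  · exact hG t.2.1 (.head (hp.rel_of_mem_triples t ht).2 (.single hcollider.2.1))
  · exact hS _ (mid_mem_of_mem_triples ht) hnoncollider.2

theorem Acyclic.not_dSep_of_reflTransGen (hG : Acyclic G) {S : Finset V} {a b : V}
    (ha : a ∉ S) (hab : Relation.ReflTransGen (fun u v => G u v ∧ v ∉ S) a b) :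
    ¬ DSep G S a b := by
  obtain ⟨l, hl, hlast⟩ := List.exists_isChain_cons_of_relationReflTransGen hab
  have hpath : (a :: l).IsChain G := hl.imp fun _ _ h => h.1
  have hS : ∀ v ∈ a :: l, v ∉ S :=
    hl.induction _ _ (fun _ _ h _ => h.2) fun _ => ha
  have htrail : IsTrail G a b (a :: l) :=
    ⟨hpath.imp fun _ _ => Or.inl, rfl, by rw [List.getLast?_eq_getLast_of_ne_nil, hlast]; simp,
      hG.nodup_of_isChain hpath⟩
  exact fun hsep => hG.not_blocked_of_isChain hpath hS (hsep _ htrail)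

end DSeparation

theorem H0_false_positive_general
    {V : Type*} [DecidableEq V]
    (G : V → V → Prop) (Indep : V → V → Finset V → Prop)
    (Xs Ys : Finset V)
    (hdisj : Disjoint Xs Ys)
    (hacy : Acyclic G)
    (hFaithful : ∀ a b S, Indep a b S → DSep G S a b)
    (k0 j0 j1 : V) (hj1 : j1 ∈ Ys)
    (hfirst : G k0 j1)
    (hpath : Relation.ReflTransGen (fun a b => G a b ∧ b ∈ Ys) j1 j0) :
    ¬ Indep k0 j0 (Xs \ {k0}) := by
  intro hindep
  have hS : ∀ v ∈ Ys, v ∉ Xs \ {k0} := fun v hv hvS =>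
    Finset.disjoint_left.1 hdisj (Finset.mem_sdiff.1 hvS).1 hv
  refine hacy.not_dSep_of_reflTransGen (by simp) ?_ (hFaithful _ _ _ hindep)
  exact .head ⟨hfirst, hS j1 hj1⟩
    (Relation.ReflTransGen.mono (fun _ _ h => ⟨h.1, hS _ h.2⟩) _ _ hpath)

/-- in a two-layer DAG `Xs ≺ Ys` with a faithful distribution, if there is a
directed path `X_{k₀} → Y_{j₁} → ⋯ → Y_{j₀}` lying entirely within `Ys` after the first
step, and `X_{k₀} → Y_{j₀}` is not an edge, then `Y_{j₀}` is dependent on `X_{k₀}` given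
`X_{-k₀}`; hence `H⁰` contains the false positive edge `X_{k₀} → Y_{j₀}`. -/
theorem H0_false_positive
    {V : Type*} [Fintype V] [DecidableEq V]
    (G : V → V → Prop) (Indep : V → V → Finset V → Prop)
    (Xs Ys : Finset V)
    (hpart : ∀ v, v ∈ Xs ∨ v ∈ Ys) (hdisj : Disjoint Xs Ys)
    (horder : ∀ a ∈ Ys, ∀ b ∈ Xs, ¬ G a b)
    (hacy : Acyclic G)
    (hMarkov : ∀ a b S, DSep G S a b → Indep a b S)
    (hFaithful : ∀ a b S, Indep a b S → DSep G S a b)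
    (k0 j0 j1 : V) (hk0 : k0 ∈ Xs) (hj0 : j0 ∈ Ys) (hj1 : j1 ∈ Ys)
    (hfirst : G k0 j1)
    (hpath : Relation.ReflTransGen (fun a b => G a b ∧ b ∈ Ys) j1 j0)
    (hnoedge : ¬ G k0 j0) :
    ¬ Indep k0 j0 (Xs \ {k0}) :=
  H0_false_positive_general G Indep Xs Ys hdisj hacy hFaithful k0 j0 j1 hj1 hfirst hpath
end

section
/- Let G be a DAG with two-layer partition X ≺ Y and P faithful to G. If X_{k0} → Y_{j1} ← Y_{j0} is an open collider in G (both edges present) and X_{k0} → Y_{j0} is not an edge of G, then X_{k0} and Y_{j0} are conditionally dependent given X_{-k0} ∪ Y_{-j0}; hence the graph H^(-j) contains the false positive edge X_{k0} → Y_{j0}. Moreover, every true edge X_k → Y_j of G is contained in H^(-j). -/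
/-! Faithfulness turns every conditional independence into a d-separation, so each claim follows
from an unblocked path. A true edge `k → j` is a path without internal vertices. The path
`k₀ → j₁ ← j₀` has the single internal vertex `j₁`, a collider lying in the conditioning set
`Y_{-j₀}` (`j₁ ≠ j₀` because `k₀ → j₁` is an edge and `k₀ → j₀` is not). -/

section DConnection

variable {V : Type*} [DecidableEq V] {G : V → V → Prop} {S : Finset V} {a b c : V}

theorem not_dSep_self : ¬ DSep G S a a := by
  intro h
  obtain ⟨t, ht, -⟩ := h [a] ⟨List.isChain_singleton a, rfl, rfl, List.nodup_singleton a⟩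
  simp [triples] at ht

theorem not_dSep_of_adj (hab : G a b ∨ G b a) : ¬ DSep G S a b := by
  intro h
  by_cases hne : a = b
  · subst hne
    exact not_dSep_self h
  · have htrail : IsTrail G a b [a, b] :=
      ⟨List.isChain_pair.mpr hab, rfl, rfl, by simpa using hne⟩
    obtain ⟨t, ht, -⟩ := h _ htrail
    simp [triples] at ht

theorem not_dSep_of_collider (hac : G a c) (hbc : G b c) (hc : c ∈ S) : ¬ DSep G S a b := by
  by_cases hca : c = a
  · subst hca
    exact not_dSep_of_adj (Or.inr hbc)
  by_cases hcb : c = b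
  · subst hcb
    exact not_dSep_of_adj (Or.inl hac)
  by_cases hab : a = b
  · subst hab
    exact not_dSep_self
  intro h
  have htrail : IsTrail G a b [a, c, b] :=
    ⟨List.isChain_cons_cons.mpr ⟨.inl hac, List.isChain_pair.mpr (.inr hbc)⟩, rfl, rfl,
      by simp [hab, Ne.symm hca, hcb]⟩
  obtain ⟨t, ht, hblocked⟩ := h _ htrail
  obtain rfl : t = (a, c, b) := by simpa [triples] using ht
  rcases hblocked with ⟨-, -, hnotin⟩ | ⟨hnoncollider, -⟩
  · exact hnotin c Relation.ReflTransGen.refl hc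
  · exact hnoncollider ⟨hac, hbc⟩

end DConnection

theorem Hminusj_false_positive_and_true_edges_general
    {V : Type*} [DecidableEq V]
    (G : V → V → Prop) (Indep : V → V → Finset V → Prop)
    (Xs Ys : Finset V)
    (hFaithful : ∀ a b S, Indep a b S → DSep G S a b)
    (k0 j0 j1 : V) (hj1 : j1 ∈ Ys)
    (hcol1 : G k0 j1) (hcol2 : G j0 j1) (hnoedge : ¬ G k0 j0) :
    (¬ Indep k0 j0 ((Xs \ {k0}) ∪ (Ys \ {j0}))) ∧
    (∀ k ∈ Xs, ∀ j ∈ Ys, G k j → ¬ Indep k j ((Xs \ {k}) ∪ (Ys \ {j}))) := by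
  constructor
  · intro hInd
    have hj1j0 : j1 ≠ j0 := fun h => hnoedge (h ▸ hcol1)
    have hj1S : j1 ∈ (Xs \ {k0}) ∪ (Ys \ {j0}) := by simp [hj1, hj1j0]
    exact not_dSep_of_collider hcol1 hcol2 hj1S (hFaithful _ _ _ hInd)
  · intro k _ j _ hkj hInd
    exact not_dSep_of_adj (Or.inl hkj) (hFaithful _ _ _ hInd)

/-- in a two-layer DAG `Xs ≺ Ys` with a faithful distribution, an open
collider `X_{k₀} → Y_{j₁} ← Y_{j₀}` with `X_{k₀} → Y_{j₀}` absent yields dependence of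
`X_{k₀}` and `Y_{j₀}` given `X_{-k₀} ∪ Y_{-j₀}` (a false positive of `H^(-j)`); moreover,
every true edge `X_k → Y_j` of `G` is contained in `H^(-j)`. -/
theorem Hminusj_false_positive_and_true_edges
    {V : Type*} [Fintype V] [DecidableEq V]
    (G : V → V → Prop) (Indep : V → V → Finset V → Prop)
    (Xs Ys : Finset V)
    (hpart : ∀ v, v ∈ Xs ∨ v ∈ Ys) (hdisj : Disjoint Xs Ys)
    (horder : ∀ a ∈ Ys, ∀ b ∈ Xs, ¬ G a b)
    (hacy : Acyclic G)
    (hMarkov : ∀ a b S, DSep G S a b → Indep a b S)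
    (hFaithful : ∀ a b S, Indep a b S → DSep G S a b)
    (k0 j0 j1 : V) (hk0 : k0 ∈ Xs) (hj0 : j0 ∈ Ys) (hj1 : j1 ∈ Ys)
    (hcol1 : G k0 j1) (hcol2 : G j0 j1) (hnoedge : ¬ G k0 j0) :
    (¬ Indep k0 j0 ((Xs \ {k0}) ∪ (Ys \ {j0}))) ∧
    (∀ k ∈ Xs, ∀ j ∈ Ys, G k j → ¬ Indep k j ((Xs \ {k}) ∪ (Ys \ {j}))) :=
  Hminusj_false_positive_and_true_edges_general G Indep Xs Ys hFaithful k0 j0 j1 hj1 hcol1 hcol2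
    hnoedge
end

section
/- Let G be a DAG admitting the partial ordering X ≺ Y and P faithful to G. For any j ∈ Y, if k ∈ S^(0)_j ∩ S^(-j)_j (i.e., k → j appears in both H^(0) and H^(-j)) but k is not a parent of j in G, then both of the following hold: there exists a directed path k → j' → ⋯ → j with j' ∈ Y, and j and k have a common child in G. -/
/-! Each failure of independence gives, by the Markov property, an active path from `k` to `j`,
whose first step cannot be the edge `k → j`. Two adjacent internal vertices of an active path
cannot both be conditioned on: both would be colliders, i.e. a 2-cycle. Given everything but
`k, j`, every internal vertex is conditioned on, so the path is `k → c ← j`. Given `X \ {k}`, a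
first step into `X` would be a collider whose other neighbour on the path again lies in `X`;
so the path starts `k → j'` with `j' ∈ Y`, and from there on it can meet no collider, since
descendants of `Y` stay in `Y` and are not conditioned on: it is directed inside `Y`. -/

section DSeparation

variable {V : Type*} {G : V → V → Prop}

theorem Acyclic.not_adj_of_adj (hacy : Acyclic G) {a b : V} (hab : G a b) : ¬ G b a :=
  fun hba => hacy a (.head hab (.single hba))

theorem mem_of_reaches {U : Set V} (hU : ∀ a b, a ∈ U → G a b → b ∈ U) {a d : V}
    (had : Reaches G a d) (ha : a ∈ U) : d ∈ U := by
  induction had with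
  | refl => exact ha
  | tail _ hbc ih => exact hU _ _ ih hbc

theorem IsTrail.ne_of_interior {a b v : V} {l₁ l₂ : List V}
    (h : IsTrail G a b (l₁ ++ v :: l₂)) (h₁ : l₁ ≠ []) (h₂ : l₂ ≠ []) : v ≠ a ∧ v ≠ b := by
  obtain ⟨-, hhead, hlast, hnodup⟩ := h
  obtain ⟨c, l₂, rfl⟩ := List.exists_cons_of_ne_nil h₂
  rw [List.head?_append_of_ne_nil _ h₁] at hhead
  rw [List.getLast?_append_cons, List.getLast?_cons_cons] at hlast
  obtain ⟨-, hv, hl₁⟩ := List.nodup_append.mp hnodup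
  exact ⟨(hl₁ a (List.mem_of_mem_head? hhead) v List.mem_cons_self).symm,
    fun hvb => (List.nodup_cons.mp hv).1 (hvb ▸ List.mem_of_getLast? hlast)⟩

theorem IsTrail.adj_of_eq_pair {a b x y : V} (h : IsTrail G a b [x, y]) : G a b ∨ G b a := by
  obtain ⟨hchain, hhead, hlast, -⟩ := h
  simp only [List.head?_cons, List.getLast?_cons_cons, List.getLast?_singleton,
    Option.some.injEq] at hhead hlast
  subst hhead hlast
  exact (List.isChain_cons_cons.mp hchain).1

variable [DecidableEq V] {S : Finset V}

theorem exists_not_blocked_trail {a b : V} (h : ¬ DSep G S a b) (hab : a ≠ b) (hnab : ¬ G a b)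
    (hnba : ¬ G b a) :
    ∃ v w r, IsTrail G a b (a :: v :: w :: r) ∧ ¬ Blocked G S (a :: v :: w :: r) := by
  simp only [DSep, not_forall] at h
  obtain ⟨p, htr, hact⟩ := h
  rcases p with _ | ⟨x, _ | ⟨v, _ | ⟨w, r⟩⟩⟩
  · simp [IsTrail] at htr
  · obtain ⟨-, hx, hx', -⟩ := htr
    simp only [List.head?_cons, List.getLast?_singleton, Option.some.injEq] at hx hx'
    exact absurd (hx.symm.trans hx') hab
  · exact absurd htr.adj_of_eq_pair (not_or.mpr ⟨hnab, hnba⟩)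
  · obtain rfl : x = a := by simpa using htr.2.1
    exact ⟨v, w, r, htr, hact⟩

theorem not_blocked_cons_cons_cons_iff {x y z : V} {r : List V} :
    ¬ Blocked G S (x :: y :: z :: r) ↔
      ¬ BlockedTriple G S (x, y, z) ∧ ¬ Blocked G S (y :: z :: r) := by
  simp [Blocked, triples]

theorem collider_of_not_blockedTriple {x y z : V} (h : ¬ BlockedTriple G S (x, y, z))
    (hy : y ∈ S) : G x y ∧ G z y := by
  by_contra hc
  exact h (Or.inr ⟨hc, hy⟩)

theorem exists_reaches_mem_of_not_blockedTriple {x y z : V}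
    (h : ¬ BlockedTriple G S (x, y, z)) (hxy : G x y) (hzy : G z y) :
    ∃ d, Reaches G y d ∧ d ∈ S := by
  by_contra hc
  push Not at hc
  exact h (Or.inl ⟨hxy, hzy, hc⟩)

theorem notMem_of_not_blocked (hacy : Acyclic G) {x y z w : V} {r : List V}
    (h : ¬ Blocked G S (x :: y :: z :: w :: r)) (hy : y ∈ S) : z ∉ S := by
  intro hz
  rw [not_blocked_cons_cons_cons_iff, not_blocked_cons_cons_cons_iff] at h
  exact hacy.not_adj_of_adj (collider_of_not_blockedTriple h.2.1 hz).1
    (collider_of_not_blockedTriple h.1 hy).2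

theorem reflTransGen_of_not_blocked {U : Set V} (hU : ∀ a b, a ∈ U → G a b → b ∈ U)
    (hUS : ∀ a ∈ U, a ∉ S) {prev a b : V} {q : List V} (hprev : G prev a) (ha : a ∈ U)
    (hact : ¬ Blocked G S (prev :: a :: q))
    (hchain : (a :: q).IsChain (fun x y => G x y ∨ G y x)) (hlast : (a :: q).getLast? = some b) :
    Relation.ReflTransGen (fun x y => G x y ∧ y ∈ U) a b := by
  induction q generalizing prev a with
  | nil =>
    obtain rfl : a = b := by simpa using hlast
    exact .refl
  | cons c q ih =>
    rw [not_blocked_cons_cons_cons_iff] at hact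
    have hca : ¬ G c a := fun hca => by
      obtain ⟨d, had, hd⟩ := exists_reaches_mem_of_not_blockedTriple hact.1 hprev hca
      exact hUS d (mem_of_reaches hU had ha) hd
    have hac : G a c := (List.isChain_cons_cons.mp hchain).1.resolve_right hca
    have hc : c ∈ U := hU a c ha hac
    exact .head ⟨hac, hc⟩ (ih hac hc hact.2 (List.isChain_cons_cons.mp hchain).2
      (by rwa [List.getLast?_cons_cons] at hlast))

theorem exists_common_child_of_not_dSep (hacy : Acyclic G) {a b : V} (hab : a ≠ b)
    (hnab : ¬ G a b) (hnba : ¬ G b a) (hS : ∀ v, v ≠ a → v ≠ b → v ∈ S)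
    (h : ¬ DSep G S a b) : ∃ c, G a c ∧ G b c := by
  obtain ⟨v, w, r, htr, hact⟩ := exists_not_blocked_trail h hab hnab hnba
  obtain ⟨hva, hvb⟩ := htr.ne_of_interior (l₁ := [a]) (by simp) (by simp)
  have hv : v ∈ S := hS v hva hvb
  rcases r with _ | ⟨z, r⟩
  · obtain rfl : w = b := by simpa using htr.2.2.1
    exact ⟨v, collider_of_not_blockedTriple (not_blocked_cons_cons_cons_iff.mp hact).1 hv⟩
  · obtain ⟨hwa, hwb⟩ := htr.ne_of_interior (l₁ := [a, v]) (by simp) (by simp)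
    exact absurd (hS w hwa hwb) (notMem_of_not_blocked hacy hact hv)

end DSeparation

section TwoLayer

variable {V : Type*} {G : V → V → Prop} {Xs Ys : Finset V}

theorem mem_of_adj_of_mem (hpart : ∀ v, v ∈ Xs ∨ v ∈ Ys) (horder : ∀ a ∈ Ys, ∀ b ∈ Xs, ¬ G a b)
    {a b : V} (ha : a ∈ Ys) (hab : G a b) : b ∈ Ys :=
  (hpart b).resolve_left fun hb => horder a ha b hb hab

variable [DecidableEq V]

theorem exists_directed_path_of_not_dSep (hpart : ∀ v, v ∈ Xs ∨ v ∈ Ys) (hdisj : Disjoint Xs Ys)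
    (horder : ∀ a ∈ Ys, ∀ b ∈ Xs, ¬ G a b) (hacy : Acyclic G) {a b : V} (ha : a ∈ Xs)
    (hb : b ∈ Ys) (hnab : ¬ G a b) (h : ¬ DSep G (Xs \ {a}) a b) :
    ∃ c ∈ Ys, G a c ∧ Relation.ReflTransGen (fun x y => G x y ∧ y ∈ Ys) c b := by
  have hab : a ≠ b := fun hab => Finset.disjoint_left.mp hdisj ha (hab ▸ hb)
  obtain ⟨v, w, r, htr, hact⟩ := exists_not_blocked_trail h hab hnab (horder b hb a ha)
  obtain ⟨hva, -⟩ := htr.ne_of_interior (l₁ := [a]) (by simp) (by simp)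
  have hchain := List.isChain_cons_cons.mp htr.1
  rcases hpart v with hvX | hvY
  · have hv : v ∈ Xs \ {a} := by simp [hvX, hva]
    have hwv : G w v :=
      (collider_of_not_blockedTriple (not_blocked_cons_cons_cons_iff.mp hact).1 hv).2
    have hwY : w ∉ Ys := fun hwY => horder w hwY v hvX hwv
    rcases r with _ | ⟨z, r⟩
    · obtain rfl : w = b := by simpa using htr.2.2.1
      exact absurd hb hwY
    · obtain ⟨hwa, -⟩ := htr.ne_of_interior (l₁ := [a, v]) (by simp) (by simp)
      have hw : w ∈ Xs \ {a} := by simp [(hpart w).resolve_right hwY, hwa]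
      exact absurd hw (notMem_of_not_blocked hacy hact hv)
  · have hav : G a v := hchain.1.resolve_right (horder v hvY a ha)
    have hYS : ∀ x ∈ (Ys : Set V), x ∉ Xs \ {a} := fun x hx hxS =>
      Finset.disjoint_left.mp hdisj (Finset.mem_sdiff.mp hxS).1 hx
    refine ⟨v, hvY, hav, reflTransGen_of_not_blocked (fun _ _ => mem_of_adj_of_mem hpart horder)
      hYS hav hvY hact hchain.2 ?_⟩
    simpa using htr.2.2.1

end TwoLayer

theorem intersection_characterization_general
    {V : Type*} [DecidableEq V]
    (G : V → V → Prop) (Indep : V → V → Finset V → Prop)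
    (Xs Ys : Finset V)
    (hpart : ∀ v, v ∈ Xs ∨ v ∈ Ys) (hdisj : Disjoint Xs Ys)
    (horder : ∀ a ∈ Ys, ∀ b ∈ Xs, ¬ G a b)
    (hacy : Acyclic G)
    (hMarkov : ∀ a b S, DSep G S a b → Indep a b S)
    (k j : V) (hk : k ∈ Xs) (hj : j ∈ Ys)
    (hS0 : ¬ Indep k j (Xs \ {k}))
    (hSmj : ¬ Indep k j ((Xs \ {k}) ∪ (Ys \ {j})))
    (hnotpa : ¬ G k j) :
    (∃ j' ∈ Ys, G k j' ∧ Relation.ReflTransGen (fun a b => G a b ∧ b ∈ Ys) j' j) ∧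
    (∃ c, G j c ∧ G k c) := by
  have hkj : k ≠ j := fun hkj => Finset.disjoint_left.mp hdisj hk (hkj ▸ hj)
  refine ⟨exists_directed_path_of_not_dSep hpart hdisj horder hacy hk hj hnotpa
    fun h => hS0 (hMarkov _ _ _ h), ?_⟩
  have hrest : ∀ v, v ≠ k → v ≠ j → v ∈ (Xs \ {k}) ∪ (Ys \ {j}) := fun v hvk hvj => by
    rcases hpart v with hv | hv <;> simp [hv, hvk, hvj]
  obtain ⟨c, hkc, hjc⟩ := exists_common_child_of_not_dSep hacy hkj hnotpa (horder j hj k hk)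
    hrest fun h => hSmj (hMarkov _ _ _ h)
  exact ⟨c, hjc, hkc⟩

/-- in a two-layer DAG `Xs ≺ Ys` with a Markov and faithful distribution,
if `k ∈ S⁰_j ∩ S^(-j)_j` (i.e. the edge `k → j` appears in both `H⁰` and `H^(-j)`) but
`k` is not a parent of `j`, then there is a directed path `k → j' → ⋯ → j` with
`j' ∈ Ys`, and `j` and `k` have a common child in `G`. -/
theorem intersection_characterization
    {V : Type*} [Fintype V] [DecidableEq V]
    (G : V → V → Prop) (Indep : V → V → Finset V → Prop)
    (Xs Ys : Finset V)
    (hpart : ∀ v, v ∈ Xs ∨ v ∈ Ys) (hdisj : Disjoint Xs Ys)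
    (horder : ∀ a ∈ Ys, ∀ b ∈ Xs, ¬ G a b)
    (hacy : Acyclic G)
    (hMarkov : ∀ a b S, DSep G S a b → Indep a b S)
    (hFaithful : ∀ a b S, Indep a b S → DSep G S a b)
    (k j : V) (hk : k ∈ Xs) (hj : j ∈ Ys)
    (hS0 : ¬ Indep k j (Xs \ {k}))
    (hSmj : ¬ Indep k j ((Xs \ {k}) ∪ (Ys \ {j})))
    (hnotpa : ¬ G k j) :
    (∃ j' ∈ Ys, G k j' ∧ Relation.ReflTransGen (fun a b => G a b ∧ b ∈ Ys) j' j) ∧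
    (∃ c, G j c ∧ G k c) :=
  intersection_characterization_general G Indep Xs Ys hpart hdisj horder hacy hMarkov k j hk hj hS0
    hSmj hnotpa
end

section
/- In a DAG, if two nodes j and k are non-adjacent and S is any set d-separating them, then S ∩ an({j, k}), the restriction of S to ancestors of j or k (including j, k themselves), also d-separates j and k. -/
/-!
Suppose a trail `p` from `j` to `k` is active given `S' = S ∩ an({j, k})` but blocked by `S`.
Since `S' ⊆ S`, the blocking triple cannot be a collider, so it is a non-collider `m ∈ S`.
Every collider of `p` has a descendant in `S'`, hence lies in `an({j, k})`. Leaving `m` along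
an edge of `p` directed away from `m`, we keep following the path as long as it points forward:
we stop at `j`, at `k`, or at a collider, all of which lie in the ancestrally closed set
`an({j, k})`. Hence `m ∈ an({j, k})`, so `m ∈ S'`, contradicting activity.
-/

section Triples

variable {V : Type*}

theorem mem_triples_iff {p : List V} {x y z : V} :
    (x, y, z) ∈ triples p ↔ ∃ l r, p = l ++ x :: y :: z :: r := by
  induction p using triples.induct with
  | case1 a b c r ih =>
    simp only [triples, List.mem_cons, Prod.mk.injEq, ih]
    constructor
    · rintro (⟨rfl, rfl, rfl⟩ | ⟨l, r', hr⟩)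
      · exact ⟨[], r, rfl⟩
      · exact ⟨a :: l, r', by simp [hr]⟩
    · rintro ⟨_ | ⟨a', l⟩, r', h⟩
      · simp_all
      · simp only [List.cons_append, List.cons.injEq] at h
        exact Or.inr ⟨l, r', h.2⟩
  | case2 p hp =>
    simp only [triples, List.not_mem_nil, false_iff, not_exists]
    intro l r rfl
    rcases l with _ | ⟨a, _ | ⟨b, _ | ⟨c, l⟩⟩⟩ <;> exact hp _ _ _ _ rfl

theorem mem_triples_reverse {p : List V} {x y z : V} :
    (x, y, z) ∈ triples p.reverse ↔ (z, y, x) ∈ triples p := by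
  simp only [mem_triples_iff]
  constructor <;> rintro ⟨l, r, h⟩ <;> refine ⟨r.reverse, l.reverse, ?_⟩
  · simpa using congrArg List.reverse h
  · simp [h]

theorem rel_of_mem_triples {R : V → V → Prop} {p : List V} (hp : p.IsChain R) {x y z : V}
    (ht : (x, y, z) ∈ triples p) : R x y ∧ R y z := by
  obtain ⟨l, r, rfl⟩ := mem_triples_iff.1 ht
  obtain ⟨-, hxy, hyz⟩ := List.isChain_append_cons_cons.1 hp
  exact ⟨hxy, (List.isChain_cons_cons.1 hyz).1⟩

end Triples

section Ancestral

variable {V : Type*} (G : V → V → Prop) {P : V → Prop}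

theorem mem_of_edge_toward_last (hP : ∀ a b, G a b → P b → P a) {p : List V} {b : V}
    (hchain : p.IsChain fun x y => G x y ∨ G y x) (hlast : p.getLast? = some b) (hb : P b)
    (hcol : ∀ t ∈ triples p, G t.1 t.2.1 → G t.2.2 t.2.1 → P t.2.1)
    {l r : List V} {m z : V} (hp : p = l ++ m :: z :: r) (hmz : G m z) : P m := by
  induction r generalizing l m z with
  | nil =>
    obtain rfl : z = b := by simpa [hp] using hlast
    exact hP m z hmz hb
  | cons w r ih =>
    have hmzw : (m, z, w) ∈ triples p := mem_triples_iff.2 ⟨l, r, hp⟩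
    refine hP m z hmz ?_
    by_cases hwz : G w z
    · exact hcol _ hmzw hmz hwz
    · exact ih (l := l ++ [m]) (by simp [hp])
        ((rel_of_mem_triples hchain hmzw).2.resolve_right hwz)

theorem mem_of_not_collider (hP : ∀ a b, G a b → P b → P a) {p : List V} {a b : V}
    (hchain : p.IsChain fun x y => G x y ∨ G y x)
    (hhead : p.head? = some a) (hlast : p.getLast? = some b) (ha : P a) (hb : P b)
    (hcol : ∀ t ∈ triples p, G t.1 t.2.1 → G t.2.2 t.2.1 → P t.2.1)
    {x m z : V} (ht : (x, m, z) ∈ triples p) (hnc : ¬ (G x m ∧ G z m)) : P m := by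
  obtain ⟨hadj_xm, hadj_mz⟩ := rel_of_mem_triples hchain ht
  obtain ⟨l, r, rfl⟩ := mem_triples_iff.1 ht
  by_cases hmz : G m z
  · exact mem_of_edge_toward_last G hP hchain hlast hb hcol (l := l ++ [x]) (r := r)
      (by simp) hmz
  · have hmx : G m x := hadj_xm.resolve_left fun h => hnc ⟨h, hadj_mz.resolve_left hmz⟩
    -- walk backwards towards `a`: run the forward argument on the reversed trail
    refine mem_of_edge_toward_last G hP (List.isChain_reverse.2 (hchain.imp fun _ _ => Or.symm))
      (by rwa [List.getLast?_reverse]) ha ?_ (l := r.reverse ++ [z]) (r := l.reverse)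
      (by simp) hmx
    rintro ⟨c, d, e⟩ hcde hcd hed
    exact hcol (e, d, c) (mem_triples_reverse.1 hcde) hed hcd

end Ancestral

theorem dsep_restrict_to_ancestors_general
    {V : Type*} [DecidableEq V]
    (G : V → V → Prop)
    (j k : V)
    (S S' : Finset V)
    (hS' : ∀ v, v ∈ S' ↔ v ∈ S ∧ (Reaches G v j ∨ Reaches G v k))
    (hsep : DSep G S j k) :
    DSep G S' j k := by
  set An : V → Prop := fun v => Reaches G v j ∨ Reaches G v k
  have hAn : ∀ a b, Reaches G a b → An b → An a := fun a b hab => Or.imp hab.trans hab.trans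
  intro p hp
  by_contra hact
  have hactive : ∀ t ∈ triples p, ¬ BlockedTriple G S' t := fun t ht h => hact ⟨t, ht, h⟩
  have hcol : ∀ t ∈ triples p, G t.1 t.2.1 → G t.2.2 t.2.1 → An t.2.1 := by
    intro t ht h1 h2
    obtain ⟨d, hd, hdS'⟩ : ∃ d, Reaches G t.2.1 d ∧ d ∈ S' := by
      by_contra! h
      exact hactive t ht (Or.inl ⟨h1, h2, h⟩)
    exact hAn _ _ hd ((hS' d).1 hdS').2
  obtain ⟨⟨x, m, z⟩, ht, hblocked⟩ := hsep p hp
  obtain ⟨hchain, hhead, hlast, -⟩ := hp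
  rcases hblocked with ⟨h1, h2, hnone⟩ | ⟨hnc, hmS⟩
  · exact hactive _ ht (Or.inl ⟨h1, h2, fun d hd hdS' => hnone d hd ((hS' d).1 hdS').1⟩)
  · have hm : An m := mem_of_not_collider G (fun a b hab => hAn a b (.single hab)) hchain hhead
      hlast (Or.inl .refl) (Or.inr .refl) hcol ht hnc
    exact hactive _ ht (Or.inr ⟨hnc, (hS' m).2 ⟨hmS, hm⟩⟩)

/-- in a DAG, if two non-adjacent nodes `j` and `k` are d-separated by a
set `S`, then the restriction `S' = S ∩ an({j, k})` of `S` to ancestors of `j` or `k`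
(including `j` and `k` themselves) also d-separates `j` and `k`. -/
theorem dsep_restrict_to_ancestors
    {V : Type*} [Fintype V] [DecidableEq V]
    (G : V → V → Prop) (hacy : Acyclic G)
    (j k : V) (hnadj : ¬ G j k ∧ ¬ G k j)
    (S S' : Finset V)
    (hS' : ∀ v, v ∈ S' ↔ v ∈ S ∧ (Reaches G v j ∨ Reaches G v k))
    (hsep : DSep G S j k) :
    DSep G S' j k :=
  dsep_restrict_to_ancestors_general G j k S S' hS' hsep
end

section
/- In a DAG G with two-layer partition X ≺ Y, for any j ∈ Y the Markov blanket of j consists of pa_j ∪ ch_j ∪ {spouses of j}, and the conditional Markov blanket of j given all of X satisfies cmb_X(j) ⊆ Y and contains pa_j ∩ Y; consequently, the searching loop restricted to subsets T of cmb_X(j) always includes the d-separating set T = pa_j ∩ Y. -/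
/-!
Read a path between `k ∈ X` and `j ∈ Y` backwards from `j`. If its first edge points into `j`,
the next vertex is a parent of `j`; it is not `k`, so it lies in `X_{-k} ∪ (pa_j ∩ Y)`, and it is
a non-collider, which blocks the path. Otherwise the path leaves `j`. Every descendant of `j` lies
in `Y` (no edge goes from `Y` to `X`) and is not a parent of `j` (acyclicity), so the conditioning
set contains no descendant of `j`; hence an unblocked path can never turn back against its edges,
and `k` would be a descendant of `j`, i.e. in `Y`.
-/

section

variable {V : Type*}

theorem mem_triples_iff_infix {p : List V} {x y z : V} :
    (x, y, z) ∈ triples p ↔ [x, y, z] <:+: p := by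
  induction p using triples.induct with
  | case1 a b c r ih => simp [triples, List.infix_cons_iff (l₂ := b :: c :: r), ih]
  | case2 l h =>
    rcases l with _ | ⟨a, _ | ⟨b, _ | ⟨c, r⟩⟩⟩
    all_goals simp only [triples, List.not_mem_nil, false_iff]
    any_goals exact fun hi => by simpa using hi.length_le
    exact absurd rfl (h a b c r)

variable {G : V → V → Prop}

theorem IsTrail.reverse {a b : V} {p : List V} (h : IsTrail G a b p) :
    IsTrail G b a p.reverse := by
  obtain ⟨hchain, hhead, hlast, hnodup⟩ := h
  refine ⟨List.isChain_reverse.mpr (hchain.imp fun _ _ => Or.symm), ?_, ?_,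
    List.nodup_reverse.mpr hnodup⟩
  · rwa [List.head?_reverse]
  · rwa [List.getLast?_reverse]

theorem Acyclic.not_edge_of_reaches (h : Acyclic G) {a b : V}
    (hab : Reaches G a b) : ¬ G b a :=
  fun hba => h a (Relation.TransGen.tail' hab hba)

theorem Acyclic.ne_of_edge (h : Acyclic G) {a b : V} (hab : G a b) : a ≠ b := by
  rintro rfl
  exact h.not_edge_of_reaches .refl hab

theorem Reaches.mem_of_forall_edge {Ys : Finset V}
    (hYs : ∀ a ∈ Ys, ∀ b, G a b → b ∈ Ys) {a b : V} (hab : Reaches G a b) (ha : a ∈ Ys) :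
    b ∈ Ys := by
  induction hab with
  | refl => exact ha
  | tail _ hcd ih => exact hYs _ ih _ hcd

section DSep

variable [DecidableEq V] {S : Finset V}

theorem blockedTriple_swap {x y z : V} :
    BlockedTriple G S (x, y, z) ↔ BlockedTriple G S (z, y, x) := by
  simp only [BlockedTriple]
  tauto

theorem Blocked.reverse {p : List V} (h : Blocked G S p) : Blocked G S p.reverse := by
  obtain ⟨⟨x, y, z⟩, hmem, hblocked⟩ := h
  exact ⟨(z, y, x), mem_triples_reverse.mpr hmem, blockedTriple_swap.mp hblocked⟩

theorem DSep.symm {a b : V} (h : DSep G S a b) : DSep G S b a := fun p hp => by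
  simpa using (h p.reverse hp.reverse).reverse

/-- A backward edge would create a collider all of whose descendants avoid `S`. -/
theorem forall_reaches_of_not_blocked {j : V} (hS : ∀ d, Reaches G j d → d ∉ S) :
    ∀ (rest : List V) {a b : V}, Reaches G j a → G a b →
      (a :: b :: rest).IsChain (fun x y => G x y ∨ G y x) → ¬ Blocked G S (a :: b :: rest) →
      ∀ v ∈ a :: b :: rest, Reaches G j v
  | [], a, b, hja, hab, _, _ => by simpa using ⟨hja, hja.tail hab⟩
  | c :: r, a, b, hja, hab, hchain, hnb => by
    have hjb : Reaches G j b := hja.tail hab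
    have hchain' := (List.isChain_cons_cons.mp hchain).2
    obtain hbc | hcb := (List.isChain_cons_cons.mp hchain').1
    · have hnb' : ¬ Blocked G S (b :: c :: r) := fun ⟨t, ht, hbt⟩ =>
        hnb ⟨t, List.mem_cons_of_mem _ ht, hbt⟩
      simpa [hja] using forall_reaches_of_not_blocked hS r hjb hbc hchain' hnb'
    · refine absurd ⟨(a, b, c), by simp [triples], Or.inl ⟨hab, hcb, fun d hbd => ?_⟩⟩ hnb
      exact hS d (hjb.trans hbd)

theorem dSep_of_two_layer {Xs Ys : Finset V}
    (hpart : ∀ v, v ∈ Xs ∨ v ∈ Ys) (hdisj : Disjoint Xs Ys)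
    (horder : ∀ a ∈ Ys, ∀ b ∈ Xs, ¬ G a b) (hacy : Acyclic G) {j k : V} (hj : j ∈ Ys)
    (hk : k ∈ Xs) (hkj : ¬ G k j) (hjk : ¬ G j k) {paY : Finset V}
    (hpaY : ∀ v, v ∈ paY ↔ v ∈ Ys ∧ G v j) :
    DSep G ((Xs \ {k}) ∪ paY) j k := by
  have hdesc : ∀ d, Reaches G j d → d ∈ Ys := fun d hjd =>
    hjd.mem_of_forall_edge (fun a ha b hab =>
      (hpart b).resolve_left fun hb => horder a ha b hb hab) hj
  have hS : ∀ d, Reaches G j d → d ∉ (Xs \ {k}) ∪ paY := by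
    intro d hjd hd
    rcases Finset.mem_union.mp hd with hdX | hdpa
    · exact Finset.disjoint_left.mp hdisj (Finset.mem_sdiff.mp hdX).1 (hdesc d hjd)
    · exact hacy.not_edge_of_reaches hjd ((hpaY d).mp hdpa).2
  rintro (_ | ⟨a, _ | ⟨v, _ | ⟨w, r⟩⟩⟩) ⟨hchain, hhead, hlast, -⟩
  · simp at hhead
  · obtain rfl : a = j := by simpa using hhead
    obtain rfl : a = k := by simpa using hlast
    exact absurd (hdesc a .refl) (Finset.disjoint_left.mp hdisj hk)
  · obtain rfl : a = j := by simpa using hhead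
    obtain rfl : v = k := by simpa using hlast
    exact ((List.isChain_cons_cons.mp hchain).1.elim hjk hkj).elim
  obtain rfl : a = j := by simpa using hhead
  by_contra hnb
  rcases (List.isChain_cons_cons.mp hchain).1 with hav | hva
  · have hk_desc := forall_reaches_of_not_blocked hS (w :: r) .refl hav hchain hnb k
      (List.mem_of_getLast? hlast)
    exact Finset.disjoint_left.mp hdisj hk (hdesc k hk_desc)
  have hvS : v ∈ (Xs \ {k}) ∪ paY := by
    rcases hpart v with hvX | hvY
    · exact Finset.mem_union_left _ (Finset.mem_sdiff.mpr
        ⟨hvX, Finset.notMem_singleton.mpr fun hvk => hkj (hvk ▸ hva)⟩)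
    · exact Finset.mem_union_right _ ((hpaY v).mpr ⟨hvY, hva⟩)
  exact hnb ⟨(a, v, w), by simp [triples],
    Or.inr ⟨fun h => hacy.not_edge_of_reaches (.single h.1) hva, hvS⟩⟩

end DSep

end

theorem cmb_contains_parents_and_dsep_general
    {V : Type*} [DecidableEq V]
    (G : V → V → Prop)
    (Xs Ys : Finset V)
    (hpart : ∀ v, v ∈ Xs ∨ v ∈ Ys) (hdisj : Disjoint Xs Ys)
    (horder : ∀ a ∈ Ys, ∀ b ∈ Xs, ¬ G a b)
    (hacy : Acyclic G)
    (mb : V → Finset V)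
    (hmb : ∀ j v, v ∈ mb j ↔ v ≠ j ∧ (G v j ∨ G j v ∨ ∃ c, G j c ∧ G v c)) :
    ∀ j ∈ Ys,
      (mb j \ Xs ⊆ Ys) ∧
      (∀ v ∈ Ys, G v j → v ∈ mb j \ Xs) ∧
      (∀ k ∈ Xs, (¬ G k j ∧ ¬ G j k) →
        ∀ paY : Finset V, (∀ v, v ∈ paY ↔ v ∈ Ys ∧ G v j) →
          DSep G ((Xs \ {k}) ∪ paY) k j) := by
  intro j hj
  refine ⟨fun v hv => (hpart v).resolve_left (Finset.mem_sdiff.mp hv).2, ?_, ?_⟩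
  · intro v hvY hvj
    exact Finset.mem_sdiff.mpr ⟨(hmb j v).mpr ⟨hacy.ne_of_edge hvj, Or.inl hvj⟩,
      fun hvX => Finset.disjoint_left.mp hdisj hvX hvY⟩
  · rintro k hk ⟨hkj, hjk⟩ paY hpaY
    exact (dSep_of_two_layer hpart hdisj horder hacy hj hk hkj hjk hpaY).symm

/-- in a two-layer DAG `Xs ≺ Ys` with a Markov distribution satisfying the
intersection property, the Markov blanket of `j ∈ Ys` is `pa_j ∪ ch_j ∪ {spouses of j}`,
the conditional Markov blanket `cmb_X(j) = mb(j) \ Xs` is a subset of `Ys` and contains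
`pa_j ∩ Ys`; consequently, for any `k ∈ Xs` non-adjacent to `j`, the conditioning set
`X_{-k} ∪ (pa_j ∩ Ys)` d-separates `k` and `j`, so the searching loop restricted to
subsets of `cmb_X(j)` always includes the d-separating set `T = pa_j ∩ Ys`. -/
theorem cmb_contains_parents_and_dsep
    {V : Type*} [Fintype V] [DecidableEq V]
    (G : V → V → Prop) (Indep : V → V → Finset V → Prop)
    (Xs Ys : Finset V)
    (hpart : ∀ v, v ∈ Xs ∨ v ∈ Ys) (hdisj : Disjoint Xs Ys)
    (horder : ∀ a ∈ Ys, ∀ b ∈ Xs, ¬ G a b)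
    (hacy : Acyclic G)
    (hMarkov : ∀ a b S, DSep G S a b → Indep a b S)
    (hInt : ∀ a b c S, Indep a b (insert c S) → Indep a c (insert b S) →
      Indep a b S ∧ Indep a c S)
    (mb : V → Finset V)
    (hmb : ∀ j v, v ∈ mb j ↔ v ≠ j ∧ (G v j ∨ G j v ∨ ∃ c, G j c ∧ G v c)) :
    ∀ j ∈ Ys,
      (mb j \ Xs ⊆ Ys) ∧
      (∀ v ∈ Ys, G v j → v ∈ mb j \ Xs) ∧
      (∀ k ∈ Xs, (¬ G k j ∧ ¬ G j k) →
        ∀ paY : Finset V, (∀ v, v ∈ paY ↔ v ∈ Ys ∧ G v j) →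
          DSep G ((Xs \ {k}) ∪ paY) k j) :=
  cmb_contains_parents_and_dsep_general G Xs Ys hpart hdisj horder hacy mb hmb
end
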